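/- Let G be a finite simple graph and let H be a finite bipartite simple graph in which every vertex has odd degree. Then 2·αod(G □ H) ≥ |V(H)| · αod(G □ K_2), where G □ K_2 is the Cartesian product of G with a single edge. -/

import Mathlib

open Finset

section OddIndepDefs

variable {V : Type*} [Fintype V] [DecidableEq V]

/-- `S` is an odd independent set in `G`: `S` is independent and every vertex outside `S`
has either no neighbor in `S` or an odd number of neighbors in `S`. -/
def IsOddIndepSet (G : SimpleGraph V) [DecidableRel G.Adj] (S : Finset V) : Prop :=
  (∀ u ∈ S, ∀ v ∈ S, ¬ G.Adj u v) ∧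
  ∀ v ∉ S, (S.filter fun u => G.Adj v u) = ∅ ∨ Odd (S.filter fun u => G.Adj v u).card

/-- The odd independence number: the largest size of an odd independent set. -/
noncomputable def oddIndepNum (G : SimpleGraph V) [DecidableRel G.Adj] : ℕ :=
  sSup {k | ∃ S : Finset V, IsOddIndepSet G S ∧ S.card = k}

/-- The independence number: the largest size of an independent set. -/
noncomputable def indepNum (G : SimpleGraph V) : ℕ :=
  sSup {k | ∃ S : Finset V, (∀ u ∈ S, ∀ v ∈ S, ¬ G.Adj u v) ∧ S.card = k}

/-- A strong odd coloring with `n` colors: a proper coloring such that for every vertex `v`,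
every color appearing in the open neighborhood of `v` appears there an odd number of times. -/
def IsStrongOddColoring (G : SimpleGraph V) [DecidableRel G.Adj] {n : ℕ} (c : V → Fin n) : Prop :=
  (∀ u v, G.Adj u v → c u ≠ c v) ∧
  ∀ v : V, ∀ k : Fin n,
    (univ.filter fun u => G.Adj v u ∧ c u = k) = ∅ ∨
    Odd (univ.filter fun u => G.Adj v u ∧ c u = k).card

/-- The strong odd chromatic number: minimum number of colors of a strong odd coloring. -/
noncomputable def strongOddChromNum (G : SimpleGraph V) [DecidableRel G.Adj] : ℕ :=
  sInf {n | ∃ c : V → Fin n, IsStrongOddColoring G c}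

/-- The chromatic number, as a natural number. -/
noncomputable def chromNum (G : SimpleGraph V) : ℕ :=
  sInf {n | ∃ c : V → Fin n, ∀ u v, G.Adj u v → c u ≠ c v}

/-- The square of a graph: two distinct vertices are adjacent iff they are at distance at most 2,
i.e. adjacent or having a common neighbor. -/
def graphSquare (G : SimpleGraph V) : SimpleGraph V where
  Adj u v := u ≠ v ∧ (G.Adj u v ∨ ∃ w, G.Adj u w ∧ G.Adj w v)
  symm := by
    constructor
    intro u v h
    refine ⟨h.1.symm, ?_⟩
    rcases h.2 with h' | ⟨w, h1, h2⟩
    · exact Or.inl h'.symm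
    · exact Or.inr ⟨w, h2.symm, h1.symm⟩
  loopless := ⟨fun v h => h.1 rfl⟩

instance (G : SimpleGraph V) [DecidableRel G.Adj] : DecidableRel (graphSquare G).Adj :=
  fun u v => inferInstanceAs (Decidable (u ≠ v ∧ (G.Adj u v ∨ ∃ w, G.Adj u w ∧ G.Adj w v)))

end OddIndepDefs


instance boxProdDecidableRel
    {α β : Type*} [DecidableEq α] [DecidableEq β]
    (G : SimpleGraph α) (H : SimpleGraph β)
    [DecidableRel G.Adj] [DecidableRel H.Adj] :
    DecidableRel (G.boxProd H).Adj := fun x y =>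
  inferInstanceAs (Decidable (G.Adj x.1 y.1 ∧ x.2 = y.2 ∨ H.Adj x.2 y.2 ∧ x.1 = y.1))

/-!
Let `c` be a proper 2-colouring of `H` and `S` an odd independent set of `G □ K₂`. The pullback
`{(v, w) | (v, c w) ∈ S}` is odd independent in `G □ H`: a vertex `(v, w)` sees the same
`G`-neighbours as `(v, c w)` does in `S`, and on the `H`-side, since every neighbour of `w` has the
other colour, it sees `deg w` copies of the single `K₂`-neighbour of `(v, c w)` (if that lies in
`S`). As `deg w` is odd, parity and emptiness of the neighbourhood in the pullback are those
in `S`. The pullbacks along `c` and along the swapped colouring together have `|V(H)| · |S|`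
elements, so one of them has at least half of that.
-/

open SimpleGraph

section BoxProd

variable {α β : Type*} [Fintype α] [Fintype β] [DecidableEq α] [DecidableEq β]
  {G : SimpleGraph α} {H : SimpleGraph β} [DecidableRel G.Adj] [DecidableRel H.Adj]

theorem card_filter_boxProd_adj (S : Finset (α × β)) (a : α) (b : β) :
    #{y ∈ S | (G □ H).Adj (a, b) y} =
      #{a' | G.Adj a a' ∧ (a', b) ∈ S} + #{b' | H.Adj b b' ∧ (a, b') ∈ S} := by
  have hsplit : {y ∈ S | (G □ H).Adj (a, b) y} =
      ({a' | G.Adj a a' ∧ (a', b) ∈ S} : Finset α).map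
          ⟨(·, b), fun _ _ h => congrArg Prod.fst h⟩ ∪
        ({b' | H.Adj b b' ∧ (a, b') ∈ S} : Finset β).map
          ⟨(a, ·), fun _ _ h => congrArg Prod.snd h⟩ := by
    ext ⟨a', b'⟩
    simp only [mem_filter, mem_union, mem_map, mem_univ, true_and, boxProd_adj]
    constructor
    · rintro ⟨hS, ⟨hG, rfl⟩ | ⟨hH, rfl⟩⟩
      exacts [Or.inl ⟨a', ⟨hG, hS⟩, rfl⟩, Or.inr ⟨b', ⟨hH, hS⟩, rfl⟩]
    · rintro (⟨a'', ⟨hG, hS⟩, h⟩ | ⟨b'', ⟨hH, hS⟩, h⟩) <;> cases h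
      exacts [⟨hS, Or.inl ⟨hG, rfl⟩⟩, ⟨hS, Or.inr ⟨hH, rfl⟩⟩]
  rw [hsplit, card_union_of_disjoint, card_map, card_map]
  simp only [Finset.disjoint_left, mem_map, mem_filter, mem_univ, true_and]
  rintro _ ⟨a', -, rfl⟩ ⟨b', ⟨hH, -⟩, h⟩
  exact hH.ne (congrArg Prod.snd h).symm

end BoxProd

theorem Fin.eq_iff_ne_of_ne {i j : Fin 2} (h : j ≠ i) (x : Fin 2) : x = j ↔ x ≠ i := by
  revert i j x; decide

namespace Finset

variable {α β γ : Type*} [Fintype α] [Fintype β] [DecidableEq α] [DecidableEq γ]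

def comapSnd (φ : β → γ) (S : Finset (α × γ)) : Finset (α × β) :=
  {p | (p.1, φ p.2) ∈ S}

@[simp]
theorem mem_comapSnd {φ : β → γ} {S : Finset (α × γ)} {p : α × β} :
    p ∈ S.comapSnd φ ↔ (p.1, φ p.2) ∈ S := by
  simp [comapSnd]

theorem card_comapSnd [DecidableEq β] (φ : β → γ) (S : Finset (α × γ)) :
    #(S.comapSnd φ) = ∑ b, #{q ∈ S | q.2 = φ b} := by
  rw [card_eq_sum_card_fiberwise (f := Prod.snd) (t := univ) (fun _ _ => mem_univ _)]
  refine sum_congr rfl fun b _ =>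
    card_nbij' (fun p => (p.1, φ b)) (fun q => (q.1, b)) ?_ ?_ ?_ ?_ <;> rintro ⟨x, y⟩ h <;> aesop

end Finset

theorem Nat.eq_zero_or_odd_add_of_odd_iff {a m n : ℕ} (hodd : Odd m ↔ Odd n)
    (hzero : n = 0 → m = 0) (h : a + n = 0 ∨ Odd (a + n)) : a + m = 0 ∨ Odd (a + m) := by
  rcases h with h | h
  · left; omega
  · right
    rw [Nat.odd_add] at h ⊢
    rwa [← Nat.not_odd_iff_even, hodd, Nat.not_odd_iff_even]

namespace SimpleGraph

variable {α β γ : Type*} [Fintype β] [Fintype γ] [DecidableEq α] [DecidableEq γ]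
  {H : SimpleGraph β} {K : SimpleGraph γ} [DecidableRel H.Adj] [DecidableRel K.Adj]

def Hom.IsLocallyOdd (φ : H →g K) : Prop :=
  ∀ b k, K.Adj (φ b) k → Odd #{b' | H.Adj b b' ∧ φ b' = k}

theorem Hom.card_adj_comap_eq_sum (φ : H →g K) (S : Finset (α × γ)) (a : α) (b : β) :
    #{b' | H.Adj b b' ∧ (a, φ b') ∈ S} =
      ∑ k ∈ {k | K.Adj (φ b) k ∧ (a, k) ∈ S}, #{b' | H.Adj b b' ∧ φ b' = k} := by
  rw [card_eq_sum_card_fiberwise (f := φ) (t := {k | K.Adj (φ b) k ∧ (a, k) ∈ S})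
    fun b' hb' => by simp_all [φ.map_adj]]
  refine sum_congr rfl fun k hk => ?_
  rw [filter_filter]
  exact congrArg card (filter_congr fun b' _ => by aesop)

theorem Coloring.isLocallyOdd_of_odd_degree (c : H.Coloring (Fin 2))
    (hdeg : ∀ b, Odd (H.degree b)) : c.IsLocallyOdd := by
  intro b k hk
  convert hdeg b using 1
  rw [← card_neighborFinset_eq_degree, neighborFinset_eq_filter]
  refine congrArg card (filter_congr fun b' _ => and_iff_left_of_imp fun hbb' => ?_)
  exact (Fin.eq_iff_ne_of_ne hk.ne' _).2 (c.valid hbb').symm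

end SimpleGraph

section Pullback

variable {α β γ : Type*} [Fintype α] [Fintype β] [Fintype γ]
  [DecidableEq α] [DecidableEq β] [DecidableEq γ]
  {G : SimpleGraph α} {H : SimpleGraph β} {K : SimpleGraph γ}
  [DecidableRel G.Adj] [DecidableRel H.Adj] [DecidableRel K.Adj]

theorem IsOddIndepSet.comapSnd {φ : H →g K} (hφ : φ.IsLocallyOdd) {S : Finset (α × γ)}
    (hS : IsOddIndepSet (G □ K) S) : IsOddIndepSet (G □ H) (S.comapSnd φ) := by
  refine ⟨fun p hp q hq hpq => hS.1 _ (mem_comapSnd.1 hp) _ (mem_comapSnd.1 hq) ?_, ?_⟩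
  · rcases boxProd_adj.1 hpq with ⟨hG, h⟩ | ⟨hH, h⟩
    exacts [boxProd_adj.2 (Or.inl ⟨hG, congrArg φ h⟩), boxProd_adj.2 (Or.inr ⟨φ.map_adj hH, h⟩)]
  rintro ⟨a, b⟩ hab
  have hodd := hS.2 (a, φ b) fun h => hab (mem_comapSnd.2 h)
  rw [← card_eq_zero, card_filter_boxProd_adj] at hodd ⊢
  simp only [mem_comapSnd]
  refine Nat.eq_zero_or_odd_add_of_odd_iff ?_ ?_ hodd <;> rw [φ.card_adj_comap_eq_sum]
  · rw [odd_sum_iff_odd_card_odd, filter_true_of_mem fun k hk => hφ b k (mem_filter.1 hk).2.1]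
  · intro h
    rw [card_eq_zero.1 h, sum_empty]

end Pullback

theorem Finset.card_comapSnd_add_card_comapSnd {α β : Type*} [Fintype α] [Fintype β]
    [DecidableEq α] [DecidableEq β] {c c' : β → Fin 2} (hcc' : ∀ b, c' b ≠ c b)
    (S : Finset (α × Fin 2)) :
    #(S.comapSnd c) + #(S.comapSnd c') = Fintype.card β * #S := by
  rw [card_comapSnd, card_comapSnd, ← sum_add_distrib, ← card_univ, ← smul_eq_mul, ← sum_const]
  refine sum_congr rfl fun b _ => ?_
  rw [← card_filter_add_card_filter_not (s := S) (p := fun q => q.2 = c b)]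
  congr 2
  exact filter_congr fun q _ => Fin.eq_iff_ne_of_ne (hcc' b) q.2

section OddIndepNum

variable {V : Type*} [Fintype V]

theorem bddAbove_card_isOddIndepSet (G : SimpleGraph V) [DecidableRel G.Adj] :
    BddAbove {k | ∃ S : Finset V, IsOddIndepSet G S ∧ #S = k} :=
  ⟨Fintype.card V, by rintro _ ⟨S, -, rfl⟩; exact card_le_univ S⟩

theorem IsOddIndepSet.card_le_oddIndepNum {G : SimpleGraph V} [DecidableRel G.Adj]
    {S : Finset V} (hS : IsOddIndepSet G S) : #S ≤ oddIndepNum G :=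
  le_csSup (bddAbove_card_isOddIndepSet G) ⟨S, hS, rfl⟩

theorem exists_isOddIndepSet_card_eq_oddIndepNum (G : SimpleGraph V) [DecidableRel G.Adj] :
    ∃ S, IsOddIndepSet G S ∧ #S = oddIndepNum G := by
  refine Nat.sSup_mem ?_ (bddAbove_card_isOddIndepSet G)
  exact ⟨0, ∅, ⟨by simp, fun _ _ => Or.inl (filter_empty _)⟩, rfl⟩

end OddIndepNum

/-- If `H` is a finite bipartite simple graph in which every vertex has odd
degree, then `2·αod(G □ H) ≥ |V(H)| · αod(G □ K₂)`. -/
theorem oddIndepNum_boxProd_ge_of_odd_bipartite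
    {V W : Type*} [Fintype V] [DecidableEq V] [Fintype W] [DecidableEq W]
    (G : SimpleGraph V) [DecidableRel G.Adj]
    (H : SimpleGraph W) [DecidableRel H.Adj]
    (hbip : H.Colorable 2) (hdeg : ∀ w : W, Odd (H.degree w)) :
    Fintype.card W * oddIndepNum (G.boxProd (⊤ : SimpleGraph (Fin 2))) ≤
      2 * oddIndepNum (G.boxProd H) := by
  obtain ⟨S, hS, hcard⟩ := exists_isOddIndepSet_card_eq_oddIndepNum (G □ (⊤ : SimpleGraph (Fin 2)))
  obtain ⟨c⟩ := hbip
  let c' := H.recolorOfEquiv (Equiv.swap 0 1) c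
  have hc'c : ∀ w, c' w ≠ c w := fun w => by
    show Equiv.swap 0 1 (c w) ≠ c w
    generalize c w = i
    revert i; decide
  have hle : ∀ d : H.Coloring (Fin 2), #(S.comapSnd d) ≤ oddIndepNum (G □ H) := fun d =>
    (hS.comapSnd (d.isLocallyOdd_of_odd_degree hdeg)).card_le_oddIndepNum
  calc Fintype.card W * oddIndepNum (G □ ⊤)
      = #(S.comapSnd c) + #(S.comapSnd c') := by
        rw [← hcard, card_comapSnd_add_card_comapSnd hc'c]
    _ ≤ 2 * oddIndepNum (G □ H) := by linarith [hle c, hle c']
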